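/- arXiv:2004.11166 — 2 statements merged into one kernel-verified Lean document; each statement's English description precedes it below -/
import Mathlib

section
/- Let P be a finite set of pairs of points in the Euclidean plane, let l = (s_l, t_l) ∈ P be a flipped pair, and let p and q be vertices of the Hanan grid H(P) lying in the bounding box B(l) with p ≤ q. Then the maximum, over all Manhattan paths π_l ∈ Π_P(l) and π_v ∈ Π_P(p,q), of the length ‖π_l ∩ π_v‖ of their common part equals max{d_x(p,q), d_y(p,q)}. (Lemma 3.1(2).) -/
noncomputable section
open scoped Classical

/-- A point in the Euclidean plane. -/
abbrev Point : Type := ℝ × ℝ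

/-- The Manhattan distance `d(p, q)`. -/
def manh (p q : Point) : ℝ := |p.1 - q.1| + |p.2 - q.2|

/-- The Euclidean length `‖pq‖` of the segment between `p` and `q`. -/
def euclen (p q : Point) : ℝ := Real.sqrt ((p.1 - q.1) ^ 2 + (p.2 - q.2) ^ 2)

/-- The segment `pq` is axis-aligned. -/
def axisAligned (p q : Point) : Prop := p.1 = q.1 ∨ p.2 = q.2

/-- `z` lies in the bounding box `B(a, b)` (componentwise between `a ⊓ b` and `a ⊔ b`). -/
def inBox (a b z : Point) : Prop := a ⊓ b ≤ z ∧ z ≤ a ⊔ b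

lemma euclen_comm (p q : Point) : euclen p q = euclen q p := by
  unfold euclen; ring_nf

/-- Length of an (unordered) edge. -/
def sym2Len : Sym2 Point → ℝ := Sym2.lift ⟨euclen, euclen_comm⟩

/-- The length of a network, given by its (finite) edge set. -/
def netLength (N : Finset (Sym2 Point)) : ℝ := ∑ e ∈ N, sym2Len e

/-- A (simple) path in the plane, given by its sequence of (distinct) vertices. -/
structure GPath where
  k : ℕ
  pts : Fin (k + 1) → Point
  inj : Function.Injective pts

/-- The `i`-th edge of a path. -/
def GPath.edge (π : GPath) (i : Fin π.k) : Sym2 Point :=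
  s(π.pts i.castSucc, π.pts i.succ)

/-- The edge set of a path. -/
def GPath.edges (π : GPath) : Finset (Sym2 Point) :=
  Finset.image π.edge Finset.univ

/-- The total (Euclidean) length of a path. -/
def GPath.length (π : GPath) : ℝ :=
  ∑ i : Fin π.k, euclen (π.pts i.castSucc) (π.pts i.succ)

/-- `π` is a Manhattan path (M-path) for the pair `(s, t)`: an `s`–`t` path all of whose
edges are axis-aligned and whose total length equals the Manhattan distance `d(s, t)`. -/
def IsMPath (s t : Point) (π : GPath) : Prop :=
  π.pts 0 = s ∧ π.pts (Fin.last π.k) = t ∧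
  (∀ i : Fin π.k, axisAligned (π.pts i.castSucc) (π.pts i.succ)) ∧
  π.length = manh s t

/-- A GMMN instance: a finite set of pairs of points. -/
abbrev Inst : Type := Finset (Point × Point)

/-- The vertex set of the Hanan grid `H(P)`. -/
def hananV (P : Inst) : Finset Point :=
  ((P.image fun v => v.1.1) ∪ (P.image fun v => v.2.1)) ×ˢ
  ((P.image fun v => v.1.2) ∪ (P.image fun v => v.2.2))

/-- `{p, q}` is an edge of the Hanan grid `H(P)`: an axis-aligned segment between two distinct
grid vertices containing no third grid vertex. -/
def IsHananEdge (P : Inst) (p q : Point) : Prop :=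
  p ∈ hananV P ∧ q ∈ hananV P ∧ p ≠ q ∧ axisAligned p q ∧
  ∀ z ∈ hananV P, inBox p q z → z = p ∨ z = q

/-- All edges of the path `π` are edges of the Hanan grid `H(P)`. -/
def OnGrid (P : Inst) (π : GPath) : Prop :=
  ∀ i : Fin π.k, IsHananEdge P (π.pts i.castSucc) (π.pts i.succ)

/-- `π ∈ Π_P(u)`: an M-path for the pair `u` that is a subgraph of the Hanan grid `H(P)`. -/
def InPi (P : Inst) (u : Point × Point) (π : GPath) : Prop :=
  IsMPath u.1 u.2 π ∧ OnGrid P π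

/-- The network `∪_{v ∈ P} π_v` determined by a choice of M-paths. -/
def netOf (P : Inst) (f : Point × Point → GPath) : Finset (Sym2 Point) :=
  P.biUnion fun v => (f v).edges

/-- `f` gives a feasible solution in `Feas(P)`: an M-path on the Hanan grid for each pair. -/
def IsFeasChoice (P : Inst) (f : Point × Point → GPath) : Prop :=
  ∀ v ∈ P, InPi P v (f v)

/-- `f` gives an optimal solution in `Opt(P)`. -/
def IsOptChoice (P : Inst) (f : Point × Point → GPath) : Prop :=
  IsFeasChoice P f ∧
  ∀ g : Point × Point → GPath, IsFeasChoice P g →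
    netLength (netOf P f) ≤ netLength (netOf P g)

/-- Adjacency in the intersection graph `IG[P]`: `u ≠ v` and the induced subgrids
`H(P, u)` and `H(P, v)` share an edge. -/
def IGAdj (P : Inst) (u v : Point × Point) : Prop :=
  u ≠ v ∧ ∃ p q : Point, IsHananEdge P p q ∧
    inBox u.1 u.2 p ∧ inBox u.1 u.2 q ∧ inBox v.1 v.2 p ∧ inBox v.1 v.2 q

/-- The total length `‖π₁ ∩ π₂‖` of the segments shared by two paths. -/
def sharedLen (π₁ π₂ : GPath) : ℝ := netLength (π₁.edges ∩ π₂.edges)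

/-- A pair `(p, q)` with `p_x ≤ q_x` is regular if `p_y ≤ q_y`. -/
def Regular (u : Point × Point) : Prop := u.1.1 ≤ u.2.1 ∧ u.1.2 ≤ u.2.2

/-- A pair `(p, q)` with `p_x ≤ q_x` is flipped if `p_y ≥ q_y`. -/
def Flipped (u : Point × Point) : Prop := u.1.1 ≤ u.2.1 ∧ u.2.2 ≤ u.1.2

/-- The intersection graph `IG[P]` as a simple graph on the pairs of `P`. -/
def IG (P : Inst) : SimpleGraph {v : Point × Point // v ∈ P} where
  Adj u v := IGAdj P u.1 v.1
  symm := ⟨by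
    rintro u v ⟨hne, p, q, he, h1, h2, h3, h4⟩
    exact ⟨hne.symm, p, q, he, h3, h4, h1, h2⟩⟩
  loopless := ⟨fun u h => h.1 rfl⟩

/-!
An M-path for the flipped pair `l` is a staircase going right and down, an M-path for `(p, q)` a
staircase going right and up. Two vertices common to both are therefore comparable in both
staircase orders, so they lie on a common horizontal or vertical line; hence all common vertices lie
on one such line, and the shared edges are either all horizontal, of total length at most
`d_x(p, q)`, or all vertical, of total length at most `d_y(p, q)`.

Conversely, let `m` be the corner `(q_x, p_y)` or `(p_x, q_y)` of `B(p, q)` on its longer side.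
Any M-path of the grid from `p` to `m` extends to one for `(p, q)`, and, as `p` and `m` lie in
`B(l)` in the order of the staircase from `s_l` to `t_l`, it (or its reverse) also extends to one
for `l`. Extensions exist because any two grid vertices are joined by an M-path of the grid.
-/

lemma abs_sub_add_abs_sub_eq_iff (x y z : ℝ) : |x - y| + |y - z| = |x - z| ↔ y ∈ Set.uIcc x z := by
  simp only [← Real.dist_eq]
  rw [dist_add_dist_eq_iff, ← mem_segment_iff_wbtw, segment_eq_uIcc]

lemma inBox_iff_uIcc {a b z : Point} :
    inBox a b z ↔ z.1 ∈ Set.uIcc a.1 b.1 ∧ z.2 ∈ Set.uIcc a.2 b.2 := by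
  change z ∈ Set.uIcc a b ↔ _
  rw [Set.uIcc_prod_eq]
  rfl

lemma manh_comm (a b : Point) : manh a b = manh b a := by
  simp only [manh, abs_sub_comm]

lemma manh_nonneg (a b : Point) : 0 ≤ manh a b := by
  unfold manh; positivity

lemma manh_triangle (a b c : Point) : manh a c ≤ manh a b + manh b c := by
  unfold manh
  linarith [abs_sub_le a.1 b.1 c.1, abs_sub_le a.2 b.2 c.2]

lemma eq_of_manh_eq_zero {a b : Point} (h : manh a b = 0) : a = b := by
  unfold manh at h
  ext <;> rw [← sub_eq_zero, ← abs_eq_zero] <;>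
    linarith [abs_nonneg (a.1 - b.1), abs_nonneg (a.2 - b.2)]

lemma manh_add_manh_eq_iff {a b c : Point} : manh a b + manh b c = manh a c ↔ inBox a c b := by
  rw [inBox_iff_uIcc, ← abs_sub_add_abs_sub_eq_iff, ← abs_sub_add_abs_sub_eq_iff]
  unfold manh
  have := abs_sub_le a.1 b.1 c.1
  have := abs_sub_le a.2 b.2 c.2
  constructor
  · intro h; constructor <;> linarith
  · rintro ⟨h1, h2⟩; linarith

lemma inBox_left (a b : Point) : inBox a b a := Set.left_mem_uIcc
lemma inBox_right (a b : Point) : inBox a b b := Set.right_mem_uIcc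

lemma inBox_subset {a b a' b' z : Point} (ha : inBox a b a') (hb : inBox a b b')
    (hz : inBox a' b' z) : inBox a b z :=
  Set.uIcc_subset_uIcc ha hb hz

lemma eq_of_inBox_of_inBox {a b c : Point} (ha : inBox b c a) (hb : inBox a c b) : a = b := by
  rw [← manh_add_manh_eq_iff] at ha hb
  exact eq_of_manh_eq_zero (by linarith [manh_comm a b])

lemma euclen_eq_manh {a b : Point} (h : axisAligned a b) : euclen a b = manh a b := by
  rcases h with h | h <;> simp [euclen, manh, h, Real.sqrt_sq_eq_abs]

lemma manh_of_regular {a b : Point} (h : Regular (a, b)) : manh a b = b.1 - a.1 + (b.2 - a.2) := by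
  obtain ⟨h1, h2⟩ := h
  rw [manh, abs_sub_comm, abs_of_nonneg (sub_nonneg.2 h1), abs_sub_comm,
    abs_of_nonneg (sub_nonneg.2 h2)]

lemma manh_of_flipped {a b : Point} (h : Flipped (a, b)) : manh a b = b.1 - a.1 + (a.2 - b.2) := by
  obtain ⟨h1, h2⟩ := h
  rw [manh, abs_sub_comm, abs_of_nonneg (sub_nonneg.2 h1), abs_of_nonneg (sub_nonneg.2 h2)]

lemma regular_of_inBox {s t u v : Point} (h : Regular (s, t)) (hu : inBox s t u)
    (hv : inBox u t v) : Regular (u, v) := by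
  obtain ⟨h1, h2⟩ := h
  rw [inBox_iff_uIcc, Set.uIcc_of_le h1, Set.uIcc_of_le h2] at hu
  rw [inBox_iff_uIcc, Set.uIcc_of_le hu.1.2, Set.uIcc_of_le hu.2.2] at hv
  exact ⟨hv.1.1, hv.2.1⟩

lemma flipped_of_inBox {s t u v : Point} (h : Flipped (s, t)) (hu : inBox s t u)
    (hv : inBox u t v) : Flipped (u, v) := by
  obtain ⟨h1, h2⟩ := h
  rw [inBox_iff_uIcc, Set.uIcc_of_le h1, Set.uIcc_of_ge h2] at hu
  rw [inBox_iff_uIcc, Set.uIcc_of_le hu.1.2, Set.uIcc_of_ge hu.2.1] at hv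
  exact ⟨hv.1.1, hv.2.2⟩

lemma axisAligned_of_regular_of_flipped {u v : Point} (hr : Regular (u, v) ∨ Regular (v, u))
    (hf : Flipped (u, v) ∨ Flipped (v, u)) : axisAligned u v := by
  rcases hr with ⟨h1, h2⟩ | ⟨h1, h2⟩ <;> rcases hf with ⟨h3, h4⟩ | ⟨h3, h4⟩
  exacts [Or.inr (le_antisymm h2 h4), Or.inl (le_antisymm h1 h3),
    Or.inl (le_antisymm h3 h1), Or.inr (le_antisymm h4 h2)]

lemma fst_eq_or_snd_eq_of_pairwise {S : Set Point} (hS : ∀ u ∈ S, ∀ v ∈ S, axisAligned u v) :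
    (∀ u ∈ S, ∀ v ∈ S, u.1 = v.1) ∨ (∀ u ∈ S, ∀ v ∈ S, u.2 = v.2) := by
  by_contra! h
  obtain ⟨⟨a, ha, b, hb, hab⟩, ⟨c, hc, d, hd, hcd⟩⟩ := h
  have hab2 : a.2 = b.2 := (hS a ha b hb).resolve_left hab
  have key : ∀ w ∈ S, w.2 = a.2 := fun w hw => by
    by_contra hw2
    have hwa : w.1 = a.1 := (hS w hw a ha).resolve_right hw2
    have hwb : w.1 = b.1 := (hS w hw b hb).resolve_right (hab2 ▸ hw2)
    exact hab (hwa.symm.trans hwb)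
  exact hcd ((key c hc).trans (key d hd).symm)

lemma IsHananEdge.symm {P : Inst} {u v : Point} (h : IsHananEdge P u v) : IsHananEdge P v u := by
  obtain ⟨hu, hv, hne, hax, hbox⟩ := h
  refine ⟨hv, hu, hne.symm, hax.imp Eq.symm Eq.symm, fun z hz hzb => (hbox z hz ?_).symm⟩
  rwa [inBox, inf_comm, sup_comm]

lemma fst_mem_hananV {P : Inst} {l : Point × Point} (hl : l ∈ P) : l.1 ∈ hananV P :=
  Finset.mem_product.2 ⟨Finset.mem_union_left _ (Finset.mem_image_of_mem _ hl),
    Finset.mem_union_left _ (Finset.mem_image_of_mem _ hl)⟩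

lemma snd_mem_hananV {P : Inst} {l : Point × Point} (hl : l ∈ P) : l.2 ∈ hananV P :=
  Finset.mem_product.2 ⟨Finset.mem_union_right _ (Finset.mem_image_of_mem _ hl),
    Finset.mem_union_right _ (Finset.mem_image_of_mem _ hl)⟩

/-- The grid vertex `(z.1, u.2)` of `B(u, z)` forces `z` onto a horizontal or vertical line
through `u`. -/
lemma isHananEdge_of_nearest {P : Inst} {u z : Point} (hu : u ∈ hananV P) (hz : z ∈ hananV P)
    (hne : u ≠ z) (hmin : ∀ v ∈ hananV P, inBox u z v → v ≠ u → manh u z ≤ manh u v) :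
    IsHananEdge P u z := by
  refine ⟨hu, hz, hne, ?_, fun v hv hvb => ?_⟩
  · set c : Point := (z.1, u.2)
    have hc : c ∈ hananV P :=
      Finset.mem_product.2 ⟨(Finset.mem_product.1 hz).1, (Finset.mem_product.1 hu).2⟩
    have hcb : inBox u z c := inBox_iff_uIcc.2 ⟨Set.right_mem_uIcc, Set.left_mem_uIcc⟩
    by_cases hcu : c = u
    · exact Or.inl (congrArg Prod.fst hcu).symm
    · have := hmin c hc hcb hcu
      simp only [manh, c, sub_self, abs_zero, add_zero] at this
      exact Or.inr (by rw [← sub_eq_zero, ← abs_nonpos_iff]; linarith [abs_nonneg (u.1 - z.1)])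
  · by_cases hvu : v = u
    · exact Or.inl hvu
    · have := hmin v hv hvb hvu
      rw [← manh_add_manh_eq_iff] at hvb
      exact Or.inr (eq_of_manh_eq_zero (le_antisymm (by linarith) (manh_nonneg v z)))

namespace GPath

def single (a : Point) : GPath := ⟨0, fun _ => a, fun i j _ => Fin.ext (by omega)⟩

def cons (a : Point) (π : GPath) (ha : a ∉ Set.range π.pts) : GPath where
  k := π.k + 1
  pts := Fin.cons a π.pts
  inj := Fin.cons_injective_iff.2 ⟨ha, π.inj⟩

def reverse (π : GPath) : GPath := ⟨π.k, π.pts ∘ Fin.rev, π.inj.comp Fin.rev_injective⟩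

@[elab_as_elim]
theorem induction_cons {motive : GPath → Prop} (single : ∀ a, motive (single a))
    (cons : ∀ a π ha, motive π → motive (cons a π ha)) (π : GPath) : motive π := by
  obtain ⟨k, pts, inj⟩ := π
  induction k with
  | zero =>
    have h : (⟨0, pts, inj⟩ : GPath) = GPath.single (pts 0) := by
      unfold GPath.single
      congr 1
      exact funext fun i => congrArg pts (Fin.ext (by omega))
    exact h ▸ single _
  | succ k ih =>
    have ha : pts 0 ∉ Set.range (Fin.tail pts) := fun ⟨i, hi⟩ => Fin.succ_ne_zero i (inj hi)
    have h : (⟨k + 1, pts, inj⟩ : GPath) =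
        GPath.cons (pts 0) ⟨k, Fin.tail pts, inj.comp (Fin.succ_injective _)⟩ ha := by
      simp only [GPath.cons, GPath.mk.injEq, heq_eq_eq, true_and]
      exact (Fin.cons_self_tail pts).symm
    exact h ▸ cons _ _ ha (ih _ _)

variable {a : Point} {π : GPath} {ha : a ∉ Set.range π.pts}

@[simp] lemma single_pts (a : Point) (i : Fin ((single a).k + 1)) : (single a).pts i = a := rfl

@[simp] lemma length_single (a : Point) : (single a).length = 0 := Fin.sum_univ_zero _

@[simp] lemma cons_pts_zero : (cons a π ha).pts 0 = a := rfl

@[simp] lemma cons_pts_last : (cons a π ha).pts (Fin.last _) = π.pts (Fin.last _) := rfl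

lemma forall_steps_cons {R : Point → Point → Prop} :
    (∀ i : Fin (cons a π ha).k, R ((cons a π ha).pts i.castSucc) ((cons a π ha).pts i.succ)) ↔
      R a (π.pts 0) ∧ ∀ i : Fin π.k, R (π.pts i.castSucc) (π.pts i.succ) := by
  simp only [cons]
  rw [Fin.forall_fin_succ]
  simp

lemma mem_edges {e : Sym2 Point} : e ∈ π.edges ↔ ∃ i, π.edge i = e := by
  simp [edges]

@[simp] lemma edges_single (a : Point) : (single a).edges = ∅ :=
  Finset.eq_empty_of_forall_notMem fun _ he => (mem_edges.1 he).elim fun i _ => i.elim0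

lemma edges_cons : (cons a π ha).edges = insert s(a, π.pts 0) π.edges := by
  ext e
  rw [Finset.mem_insert, mem_edges, mem_edges]
  refine Fin.exists_fin_succ.trans (or_congr eq_comm (exists_congr fun i => ?_))
  simp [edge, cons]

lemma length_cons : (cons a π ha).length = euclen a (π.pts 0) + π.length := by
  change ∑ i : Fin (π.k + 1), _ = _
  rw [Fin.sum_univ_succ]
  simp [cons, length]

lemma edge_injective (π : GPath) : Function.Injective π.edge := by
  intro i j hij
  rcases Sym2.eq_iff.1 hij with ⟨h, -⟩ | ⟨h1, h2⟩
  · exact Fin.castSucc_injective _ (π.inj h)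
  · have h1 := Fin.val_eq_of_eq (π.inj h1)
    have h2 := Fin.val_eq_of_eq (π.inj h2)
    simp only [Fin.val_castSucc, Fin.val_succ] at h1 h2
    omega

lemma length_eq_netLength (π : GPath) : π.length = netLength π.edges := by
  rw [netLength, edges, Finset.sum_image fun i _ j _ h => edge_injective π h]
  rfl

lemma mem_range_of_mem_edges {u v : Point} (h : s(u, v) ∈ π.edges) :
    u ∈ Set.range π.pts ∧ v ∈ Set.range π.pts := by
  obtain ⟨i, -, hi⟩ := Finset.mem_image.1 h
  rcases Sym2.eq_iff.1 hi with ⟨hu, hv⟩ | ⟨hu, hv⟩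
  exacts [⟨⟨_, hu⟩, ⟨_, hv⟩⟩, ⟨⟨_, hv⟩, ⟨_, hu⟩⟩]

@[simp] lemma edges_reverse (π : GPath) : π.reverse.edges = π.edges := by
  ext e
  have h (i : Fin π.k) : π.reverse.edge i = π.edge i.rev := by
    simp [edge, reverse, Fin.rev_castSucc, Fin.rev_succ, Sym2.eq_swap]
  simp only [mem_edges]
  constructor
  · rintro ⟨i, rfl⟩
    exact ⟨i.rev, (h i).symm⟩
  · rintro ⟨i, rfl⟩
    exact ⟨i.rev, by rw [h, Fin.rev_rev]⟩

lemma forall_steps_reverse {R : Point → Point → Prop} (hR : ∀ u v, R u v → R v u)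
    (h : ∀ i : Fin π.k, R (π.pts i.castSucc) (π.pts i.succ)) (i : Fin π.reverse.k) :
    R (π.reverse.pts i.castSucc) (π.reverse.pts i.succ) := by
  change R (π.pts i.castSucc.rev) (π.pts i.succ.rev)
  rw [Fin.rev_castSucc, Fin.rev_succ]
  exact hR _ _ (h i.rev)

end GPath

open GPath

lemma manh_le_length {π : GPath}
    (h : ∀ i : Fin π.k, axisAligned (π.pts i.castSucc) (π.pts i.succ)) :
    manh (π.pts 0) (π.pts (Fin.last _)) ≤ π.length := by
  induction π using GPath.induction_cons with
  | single a => simp [manh]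
  | cons a π ha ih =>
    obtain ⟨h0, hπ⟩ := forall_steps_cons.1 h
    rw [length_cons, euclen_eq_manh h0, cons_pts_zero, cons_pts_last]
    linarith [manh_triangle a (π.pts 0) (π.pts (Fin.last _)), ih hπ]

lemma isMPath_single_iff {a s t : Point} : IsMPath s t (single a) ↔ s = a ∧ t = a := by
  simp only [IsMPath, single_pts, length_single]
  constructor
  · rintro ⟨rfl, rfl, -⟩
    exact ⟨rfl, rfl⟩
  · rintro ⟨rfl, rfl⟩
    exact ⟨rfl, rfl, fun i => i.elim0, by simp [manh]⟩

lemma isMPath_cons_iff {a c : Point} {π : GPath} {ha : a ∉ Set.range π.pts} :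
    IsMPath a c (cons a π ha) ↔ axisAligned a (π.pts 0) ∧ IsMPath (π.pts 0) c π ∧
      manh a (π.pts 0) + manh (π.pts 0) c = manh a c := by
  simp only [IsMPath, cons_pts_zero, cons_pts_last, forall_steps_cons, length_cons, true_and]
  constructor
  · rintro ⟨hc, ⟨h0, hax⟩, hlen⟩
    rw [euclen_eq_manh h0] at hlen
    have := manh_le_length hax
    rw [hc] at this
    have := manh_triangle a (π.pts 0) c
    exact ⟨h0, ⟨hc, hax, by linarith⟩, by linarith⟩
  · rintro ⟨h0, ⟨hc, hax, hlen⟩, hadd⟩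
    exact ⟨hc, ⟨h0, hax⟩, by rw [euclen_eq_manh h0, hlen, hadd]⟩

lemma IsMPath.inBox_of_le {s t : Point} {π : GPath} (h : IsMPath s t π) {i j : Fin (π.k + 1)}
    (hij : i ≤ j) : inBox (π.pts i) t (π.pts j) := by
  induction π using GPath.induction_cons generalizing s with
  | single a =>
    obtain ⟨rfl, rfl⟩ := isMPath_single_iff.1 h
    exact inBox_left _ _
  | cons a π ha ih =>
    obtain rfl : a = s := h.1
    obtain ⟨-, hπ, hadd⟩ := isMPath_cons_iff.1 h
    have hb : inBox a t (π.pts 0) := manh_add_manh_eq_iff.1 hadd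
    induction i using Fin.cases with
    | zero =>
      induction j using Fin.cases with
      | zero => exact inBox_left _ _
      | succ j => exact inBox_subset hb (inBox_right _ _) (ih hπ (i := 0) (Fin.zero_le _))
    | succ i =>
      induction j using Fin.cases with
      | zero => exact absurd (le_antisymm hij (Fin.zero_le _)) (Fin.succ_ne_zero i)
      | succ j => exact ih hπ (Fin.succ_le_succ_iff.1 hij)

lemma IsMPath.regular {s t : Point} {π : GPath} (h : IsMPath s t π) (hst : Regular (s, t))
    {i j : Fin (π.k + 1)} (hij : i ≤ j) : Regular (π.pts i, π.pts j) := by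
  have hi := h.inBox_of_le (Fin.zero_le i)
  rw [h.1] at hi
  exact regular_of_inBox hst hi (h.inBox_of_le hij)

lemma IsMPath.flipped {s t : Point} {π : GPath} (h : IsMPath s t π) (hst : Flipped (s, t))
    {i j : Fin (π.k + 1)} (hij : i ≤ j) : Flipped (π.pts i, π.pts j) := by
  have hi := h.inBox_of_le (Fin.zero_le i)
  rw [h.1] at hi
  exact flipped_of_inBox hst hi (h.inBox_of_le hij)

lemma InPi.reverse {P : Inst} {s t : Point} {π : GPath} (h : InPi P (s, t) π) :
    InPi P (t, s) π.reverse := by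
  obtain ⟨⟨h0, hlast, hax, hlen⟩, hgrid⟩ := h
  refine ⟨⟨?_, ?_, forall_steps_reverse (fun _ _ h => h.imp Eq.symm Eq.symm) hax,
    by rw [length_eq_netLength, edges_reverse, ← length_eq_netLength, hlen, manh_comm]⟩,
    forall_steps_reverse (fun _ _ => IsHananEdge.symm) hgrid⟩
  · change π.pts (Fin.rev 0) = t
    rwa [Fin.rev_zero]
  · change π.pts (Fin.rev (Fin.last _)) = s
    rwa [Fin.rev_last]

lemma InPi.exists_cons {P : Inst} {a b c : Point} {π : GPath} (hab : IsHananEdge P a b)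
    (hπ : InPi P (b, c) π) (hadd : manh a b + manh b c = manh a c) :
    ∃ π', InPi P (a, c) π' ∧ π'.edges = insert s(a, b) π.edges := by
  obtain ⟨hmp, hgrid⟩ := hπ
  obtain rfl : π.pts 0 = b := hmp.1
  have ha : a ∉ Set.range π.pts := by
    rintro ⟨i, hi⟩
    have hai : inBox (π.pts 0) c a := hi ▸ hmp.inBox_of_le (Fin.zero_le i)
    exact hab.2.2.1 (eq_of_inBox_of_inBox hai (manh_add_manh_eq_iff.1 hadd))
  exact ⟨cons a π ha, ⟨isMPath_cons_iff.2 ⟨hab.2.2.2.1, hmp, hadd⟩,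
    forall_steps_cons.2 ⟨hab, hgrid⟩⟩, edges_cons⟩

lemma inPi_cons_iff {P : Inst} {a c : Point} {π : GPath} {ha : a ∉ Set.range π.pts} :
    InPi P (a, c) (cons a π ha) ↔ IsHananEdge P a (π.pts 0) ∧ InPi P (π.pts 0, c) π ∧
      manh a (π.pts 0) + manh (π.pts 0) c = manh a c := by
  simp only [InPi, OnGrid, isMPath_cons_iff, forall_steps_cons]
  exact ⟨fun ⟨⟨_, hπ, hadd⟩, hab, hgrid⟩ => ⟨hab, ⟨hπ, hgrid⟩, hadd⟩,
    fun ⟨hab, ⟨hπ, hgrid⟩, hadd⟩ => ⟨⟨hab.2.2.2.1, hπ, hadd⟩, hab, hgrid⟩⟩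

lemma InPi.exists_append {P : Inst} {a b c : Point} {π₁ π₂ : GPath} (h₁ : InPi P (a, b) π₁)
    (h₂ : InPi P (b, c) π₂) (hadd : manh a b + manh b c = manh a c) :
    ∃ π, InPi P (a, c) π ∧ π.edges = π₁.edges ∪ π₂.edges := by
  induction π₁ using GPath.induction_cons generalizing a with
  | single x =>
    obtain ⟨rfl, rfl⟩ : a = x ∧ b = x := isMPath_single_iff.1 h₁.1
    exact ⟨π₂, h₂, by simp⟩
  | cons x π₁ hx ih =>
    obtain rfl : x = a := h₁.1.1
    obtain ⟨hab', h₁', hadd'⟩ := inPi_cons_iff.1 h₁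
    have := manh_triangle x (π₁.pts 0) c
    have := manh_triangle (π₁.pts 0) b c
    obtain ⟨π, hπ, hedges⟩ := ih h₁' (by linarith)
    obtain ⟨π', hπ', hedges'⟩ := hπ.exists_cons hab' (by linarith)
    exact ⟨π', hπ', by rw [hedges', hedges, edges_cons, Finset.insert_union]⟩

/-- Step to a grid vertex of `B(u, w)` nearest to `u` and recurse on the strictly smaller box it
spans with `w`. -/
theorem exists_inPi {P : Inst} {u w : Point} (hu : u ∈ hananV P) (hw : w ∈ hananV P) :
    ∃ π, InPi P (u, w) π := by
  induction hn : ((hananV P).filter (inBox u w)).card using Nat.strong_induction_on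
    generalizing u with
  | _ n ih =>
  by_cases huw : u = w
  · subst huw
    exact ⟨single u, isMPath_single_iff.2 ⟨rfl, rfl⟩, fun i => i.elim0⟩
  obtain ⟨z, hz, hmin⟩ := ((hananV P).filter fun z => inBox u w z ∧ z ≠ u).exists_min_image
    (manh u) ⟨w, Finset.mem_filter.2 ⟨hw, inBox_right u w, Ne.symm huw⟩⟩
  obtain ⟨hzV, hzB, hzu⟩ := Finset.mem_filter.1 hz
  have hedge : IsHananEdge P u z := isHananEdge_of_nearest hu hzV (Ne.symm hzu)
    fun v hv hvB hvu =>
      hmin v (Finset.mem_filter.2 ⟨hv, inBox_subset (inBox_left u w) hzB hvB, hvu⟩)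
  have hlt : ((hananV P).filter (inBox z w)).card < n := by
    rw [← hn]
    refine Finset.card_lt_card ⟨fun v hv => ?_, fun hsub => hzu ?_⟩
    · rw [Finset.mem_filter] at hv ⊢
      exact ⟨hv.1, inBox_subset hzB (inBox_right u w) hv.2⟩
    have hu' := hsub (Finset.mem_filter.2 ⟨hu, inBox_left u w⟩)
    exact (eq_of_inBox_of_inBox (Finset.mem_filter.1 hu').2 hzB).symm
  obtain ⟨π, hπ⟩ := ih _ hlt hzV rfl
  obtain ⟨π', hπ', -⟩ := hπ.exists_cons hedge (manh_add_manh_eq_iff.2 hzB)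
  exact ⟨π', hπ'⟩

lemma exists_inPi_through {P : Inst} {s t a b : Point} {R : GPath} (hs : s ∈ hananV P)
    (ht : t ∈ hananV P) (ha : a ∈ hananV P) (hb : b ∈ hananV P) (hR : InPi P (a, b) R)
    (hadd : manh s a + manh a b + manh b t = manh s t) :
    ∃ π, InPi P (s, t) π ∧ R.edges ⊆ π.edges := by
  obtain ⟨π₁, hπ₁⟩ := exists_inPi hs ha
  obtain ⟨π₃, hπ₃⟩ := exists_inPi hb ht
  have := manh_triangle s a b
  have := manh_triangle s b t
  obtain ⟨π₂, hπ₂, hedges₂⟩ := hπ₁.exists_append hR (by linarith)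
  obtain ⟨π, hπ, hedges⟩ := hπ₂.exists_append hπ₃ (by linarith)
  refine ⟨π, hπ, ?_⟩
  rw [hedges, hedges₂]
  exact Finset.subset_union_right.trans Finset.subset_union_left

lemma length_le_sharedLen {R π₁ π₂ : GPath} (h₁ : R.edges ⊆ π₁.edges) (h₂ : R.edges ⊆ π₂.edges) :
    R.length ≤ sharedLen π₁ π₂ := by
  rw [length_eq_netLength]
  refine Finset.sum_le_sum_of_subset_of_nonneg (Finset.subset_inter h₁ h₂) fun e _ _ => ?_
  induction e using Sym2.ind with
  | _ u v => exact Real.sqrt_nonneg _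

lemma exists_le_sharedLen_of_corner {P : Inst} {s t p q m : Point} {R : GPath}
    (hq : q ∈ hananV P) (hm : m ∈ hananV P) (hR : InPi P (p, m) R)
    (hmq : manh p m + manh m q = manh p q) (hl : ∃ π, InPi P (s, t) π ∧ R.edges ⊆ π.edges) :
    ∃ πl πv, InPi P (s, t) πl ∧ InPi P (p, q) πv ∧ manh p m ≤ sharedLen πl πv := by
  obtain ⟨πl, hπl, hRl⟩ := hl
  obtain ⟨π, hπ⟩ := exists_inPi hm hq
  obtain ⟨πv, hπv, hedges⟩ := hR.exists_append hπ hmq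
  exact ⟨πl, πv, hπl, hπv, hR.1.2.2.2 ▸
    length_le_sharedLen hRl (hedges ▸ Finset.subset_union_left)⟩

lemma exists_le_sharedLen {P : Inst} {s t p q : Point} (hs : s ∈ hananV P) (ht : t ∈ hananV P)
    (hp : p ∈ hananV P) (hq : q ∈ hananV P) (hst : Flipped (s, t)) (hpB : inBox s t p)
    (hqB : inBox s t q) (hpq : p ≤ q) :
    ∃ πl πv, InPi P (s, t) πl ∧ InPi P (p, q) πv ∧
      max |p.1 - q.1| |p.2 - q.2| ≤ sharedLen πl πv := by
  have hsp := flipped_of_inBox hst (inBox_left s t) hpB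
  have hsq := flipped_of_inBox hst (inBox_left s t) hqB
  have hpt := flipped_of_inBox hst hpB (inBox_right p t)
  have hqt := flipped_of_inBox hst hqB (inBox_right q t)
  rw [abs_sub_comm, abs_of_nonneg (sub_nonneg.2 hpq.1), abs_sub_comm,
    abs_of_nonneg (sub_nonneg.2 hpq.2)]
  obtain hxy | hxy := le_total (q.2 - p.2) (q.1 - p.1)
  · set m : Point := (q.1, p.2)
    have hm : m ∈ hananV P :=
      Finset.mem_product.2 ⟨(Finset.mem_product.1 hq).1, (Finset.mem_product.1 hp).2⟩
    have hpm : manh p m = q.1 - p.1 := by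
      rw [manh_of_regular (⟨hpq.1, le_rfl⟩ : Regular (p, m))]; ring
    obtain ⟨R, hR⟩ := exists_inPi hp hm
    rw [max_eq_left hxy, ← hpm]
    refine exists_le_sharedLen_of_corner hq hm hR ?_ (exists_inPi_through hs ht hp hm hR ?_)
    · rw [hpm, manh_of_regular (⟨le_rfl, hpq.2⟩ : Regular (m, q)), manh_of_regular hpq]; ring
    · rw [hpm, manh_of_flipped hsp, manh_of_flipped (⟨hqt.1, hpt.2⟩ : Flipped (m, t)),
        manh_of_flipped hst]; ring
  · set m : Point := (p.1, q.2)
    have hm : m ∈ hananV P :=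
      Finset.mem_product.2 ⟨(Finset.mem_product.1 hp).1, (Finset.mem_product.1 hq).2⟩
    have hpm : manh p m = q.2 - p.2 := by
      rw [manh_of_regular (⟨le_rfl, hpq.2⟩ : Regular (p, m))]; ring
    obtain ⟨R, hR⟩ := exists_inPi hp hm
    rw [max_eq_right hxy, ← hpm]
    refine exists_le_sharedLen_of_corner hq hm hR ?_ ?_
    · rw [hpm, manh_of_regular (⟨hpq.1, le_rfl⟩ : Regular (m, q)), manh_of_regular hpq]; ring
    · simpa using exists_inPi_through hs ht hm hp hR.reverse (by
        rw [manh_comm m p, hpm, manh_of_flipped (⟨hsp.1, hsq.2⟩ : Flipped (s, m)),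
          manh_of_flipped hpt, manh_of_flipped hst]; ring)

lemma Fin.sum_succ_sub_castSucc {k : ℕ} (g : Fin (k + 1) → ℝ) :
    ∑ i : Fin k, (g i.succ - g i.castSucc) = g (Fin.last k) - g 0 := by
  induction k with
  | zero => simp
  | succ k ih =>
    rw [Fin.sum_univ_castSucc]
    simp only [Fin.succ_castSucc]
    rw [ih fun i => g i.castSucc, Fin.castSucc_zero, Fin.succ_last]
    ring

lemma Fin.sum_succ_sub_castSucc_le {k : ℕ} {g : Fin (k + 1) → ℝ} (hg : Monotone g)
    (I : Finset (Fin k)) : ∑ i ∈ I, (g i.succ - g i.castSucc) ≤ g (Fin.last k) - g 0 := by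
  rw [← Fin.sum_succ_sub_castSucc]
  exact Finset.sum_le_sum_of_subset_of_nonneg (Finset.subset_univ I)
    fun i _ _ => sub_nonneg.2 (hg (Fin.castSucc_le_succ i))

lemma sharedLen_eq_sum (π₁ π₂ : GPath) :
    sharedLen π₁ π₂ = ∑ i ∈ Finset.univ.filter (fun i => π₂.edge i ∈ π₁.edges),
      euclen (π₂.pts i.castSucc) (π₂.pts i.succ) := by
  rw [sharedLen, netLength, Finset.inter_comm, ← Finset.filter_mem_eq_inter,
    show π₂.edges = Finset.univ.image π₂.edge from rfl, Finset.filter_image,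
    Finset.sum_image fun i _ j _ h => edge_injective π₂ h]
  rfl

theorem sharedLen_le {s t p q : Point} {πl πv : GPath} (hl : IsMPath s t πl) (hv : IsMPath p q πv)
    (hst : Flipped (s, t)) (hpq : p ≤ q) : sharedLen πl πv ≤ max |p.1 - q.1| |p.2 - q.2| := by
  set S := Set.range πl.pts ∩ Set.range πv.pts
  have hS : ∀ u ∈ S, ∀ v ∈ S, axisAligned u v := by
    rintro _ ⟨⟨i, rfl⟩, ⟨j, hj⟩⟩ _ ⟨⟨i', rfl⟩, ⟨j', hj'⟩⟩
    apply axisAligned_of_regular_of_flipped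
    · rw [← hj, ← hj']
      exact (le_total j j').imp (hv.regular hpq) (hv.regular hpq)
    · exact (le_total i i').imp (hl.flipped hst) (hl.flipped hst)
  set I := Finset.univ.filter fun i => πv.edge i ∈ πl.edges
  have hI : ∀ i ∈ I, πv.pts i.castSucc ∈ S ∧ πv.pts i.succ ∈ S := fun i hi => by
    obtain ⟨h₁, h₂⟩ := mem_range_of_mem_edges (Finset.mem_filter.1 hi).2
    exact ⟨⟨h₁, _, rfl⟩, ⟨h₂, _, rfl⟩⟩
  have hstep (i : Fin πv.k) := manh_of_regular (hv.regular hpq (Fin.castSucc_le_succ i))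
  rw [sharedLen_eq_sum]
  rcases fst_eq_or_snd_eq_of_pairwise hS with hx | hy
  · calc _ = ∑ i ∈ I, ((πv.pts i.succ).2 - (πv.pts i.castSucc).2) :=
          Finset.sum_congr rfl fun i hi => by
            rw [euclen_eq_manh (Or.inl (hx _ (hI i hi).1 _ (hI i hi).2)), hstep,
              hx _ (hI i hi).2 _ (hI i hi).1, sub_self, zero_add]
      _ ≤ (πv.pts (Fin.last _)).2 - (πv.pts 0).2 :=
          Fin.sum_succ_sub_castSucc_le (g := fun i => (πv.pts i).2)
            (fun i j h => (hv.regular hpq h).2) I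
      _ ≤ max |p.1 - q.1| |p.2 - q.2| := by
          rw [hv.1, hv.2.1, abs_sub_comm p.2]
          exact (le_abs_self _).trans (le_max_right _ _)
  · calc _ = ∑ i ∈ I, ((πv.pts i.succ).1 - (πv.pts i.castSucc).1) :=
          Finset.sum_congr rfl fun i hi => by
            rw [euclen_eq_manh (Or.inr (hy _ (hI i hi).1 _ (hI i hi).2)), hstep,
              hy _ (hI i hi).2 _ (hI i hi).1, sub_self, add_zero]
      _ ≤ (πv.pts (Fin.last _)).1 - (πv.pts 0).1 :=
          Fin.sum_succ_sub_castSucc_le (g := fun i => (πv.pts i).1)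
            (fun i j h => (hv.regular hpq h).1) I
      _ ≤ max |p.1 - q.1| |p.2 - q.2| := by
          rw [hv.1, hv.2.1, abs_sub_comm p.1]
          exact (le_abs_self _).trans (le_max_left _ _)

/-- Lemma 3.1(2): for a flipped pair `l ∈ P` and Hanan-grid vertices `p ≤ q` in `B(l)`,
the maximum length of segments shared by an M-path for `l` and an M-path for `(p, q)`
equals `max{d_x(p, q), d_y(p, q)}`. -/
theorem sharable_length_flipped (P : Inst) (l : Point × Point) (hl : l ∈ P)
    (hfl : Flipped l) (p q : Point)
    (hp : p ∈ hananV P) (hq : q ∈ hananV P)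
    (hpB : inBox l.1 l.2 p) (hqB : inBox l.1 l.2 q) (hpq : p ≤ q) :
    IsGreatest {x : ℝ | ∃ πl πv : GPath, InPi P l πl ∧ InPi P (p, q) πv ∧
      x = sharedLen πl πv} (max |p.1 - q.1| |p.2 - q.2|) := by
  refine ⟨?_, fun x ⟨πl, πv, hπl, hπv, hx⟩ => hx ▸ sharedLen_le hπl.1 hπv.1 hfl hpq⟩
  obtain ⟨πl, πv, hπl, hπv, hle⟩ :=
    exists_le_sharedLen (fst_mem_hananV hl) (snd_mem_hananV hl) hp hq hfl hpB hqB hpq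
  exact ⟨πl, πv, hπl, hπv, le_antisymm hle (sharedLen_le hπl.1 hπv.1 hfl hpq)⟩

end
end

section
/- Let P be a GMMN instance, let Q ⊆ P and X ⊆ Q be such that no pair in Q \ X is adjacent in IG[P] to any pair in P \ Q. Let N1 = (π¹_w)_{w∈P} and N2 = (π²_w)_{w∈P} be feasible solutions in Feas(P) with π¹_v = π²_v for every v ∈ X. If ‖∪_{w∈Q} π¹_w‖ < ‖∪_{w∈Q} π²_w‖, then N2 is suboptimal, i.e., N2 ∉ Opt(P). (This is the separation lemma of Appendix A, where Q = P_t and X = X_t come from a tree decomposition.) -/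
noncomputable section
open scoped Classical

/-!
Splice the two solutions: take `f` on `Q` and `g` off `Q`. An M-path never leaves the bounding
box of its pair, so an edge shared by the `g`-paths of `w ∈ Q` and `u ∉ Q` makes `w` and `u`
adjacent in `IG[P]`; by separation `w ∈ X`, where `f` and `g` agree. Hence every edge that the
part of `g` outside `Q` shares with `g` on `Q` is also an edge of `f` on `Q`, and replacing
`g` on `Q` by the strictly shorter `f` shortens the whole network.
-/

lemma manh_triangle_s7 (p q r : Point) : manh p r ≤ manh p q + manh q r := by
  unfold manh
  linarith [abs_sub_le p.1 q.1 r.1, abs_sub_le p.2 q.2 r.2]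

lemma euclen_eq_manh_of_axisAligned {p q : Point} (h : axisAligned p q) :
    euclen p q = manh p q := by
  rcases h with h | h <;> simp [euclen, manh, h, Real.sqrt_sq_eq_abs]

lemma manh_le_sum_Ico (x : ℕ → Point) {m n : ℕ} (h : m ≤ n) :
    manh (x m) (x n) ≤ ∑ i ∈ Finset.Ico m n, manh (x i) (x (i + 1)) := by
  simp only [manh, Finset.sum_add_distrib]
  simpa only [Real.dist_eq] using add_le_add (dist_le_Ico_sum_dist (fun i => (x i).1) h)
    (dist_le_Ico_sum_dist (fun i => (x i).2) h)

lemma inf_le_and_le_sup_of_abs_sub_add_abs_sub_eq {a b c : ℝ}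
    (h : |a - c| + |c - b| = |a - b|) : a ⊓ b ≤ c ∧ c ≤ a ⊔ b := by
  rcases (abs_add_eq_add_abs_iff (a - c) (c - b)).1 (by rw [sub_add_sub_cancel, h]) with
    ⟨h₁, h₂⟩ | ⟨h₁, h₂⟩
  · exact ⟨inf_le_right.trans (by linarith), (by linarith : c ≤ a).trans le_sup_left⟩
  · exact ⟨inf_le_left.trans (by linarith), (by linarith : c ≤ b).trans le_sup_right⟩

lemma inBox_of_manh_add_manh_eq {s t z : Point} (h : manh s z + manh z t = manh s t) :
    inBox s t z := by
  unfold manh at h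
  have hx := inf_le_and_le_sup_of_abs_sub_add_abs_sub_eq (a := s.1) (b := t.1) (c := z.1)
    (by linarith [abs_sub_le s.1 z.1 t.1, abs_sub_le s.2 z.2 t.2])
  have hy := inf_le_and_le_sup_of_abs_sub_add_abs_sub_eq (a := s.2) (b := t.2) (c := z.2)
    (by linarith [abs_sub_le s.1 z.1 t.1, abs_sub_le s.2 z.2 t.2])
  exact ⟨⟨hx.1, hy.1⟩, ⟨hx.2, hy.2⟩⟩

namespace GPath

def vertex (π : GPath) (n : ℕ) : Point :=
  π.pts ⟨min n π.k, Nat.lt_succ_of_le (min_le_right _ _)⟩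

lemma vertex_val (π : GPath) (j : Fin (π.k + 1)) : π.vertex j = π.pts j :=
  congrArg π.pts (Fin.ext (min_eq_left (Nat.lt_succ_iff.mp j.isLt)))

lemma vertex_zero (π : GPath) : π.vertex 0 = π.pts 0 := π.vertex_val 0

lemma vertex_last (π : GPath) : π.vertex π.k = π.pts (Fin.last π.k) := π.vertex_val (Fin.last π.k)

lemma length_eq_sum_range_manh {π : GPath}
    (hax : ∀ i : Fin π.k, axisAligned (π.pts i.castSucc) (π.pts i.succ)) :
    π.length = ∑ i ∈ Finset.range π.k, manh (π.vertex i) (π.vertex (i + 1)) := by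
  rw [← Fin.sum_univ_eq_sum_range (fun i => manh (π.vertex i) (π.vertex (i + 1)))]
  refine Finset.sum_congr rfl fun i _ => ?_
  rw [euclen_eq_manh_of_axisAligned (hax i), ← π.vertex_val, ← π.vertex_val]
  rfl

end GPath

/-- With `z = π.pts j`, the subpaths before and after `z` are at least `d(s, z)` and `d(z, t)`
long, so `d(s, z) + d(z, t) ≤ d(s, t)`, which forces `z` into the bounding box. -/
lemma IsMPath.inBox_pts {s t : Point} {π : GPath} (hπ : IsMPath s t π) (j : Fin (π.k + 1)) :
    inBox s t (π.pts j) := by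
  obtain ⟨hs, ht, hax, hlen⟩ := hπ
  have hj : j.val ≤ π.k := Nat.lt_succ_iff.mp j.isLt
  have hsplit := Finset.sum_Ico_consecutive (fun i => manh (π.vertex i) (π.vertex (i + 1)))
    (Nat.zero_le j.val) hj
  rw [GPath.length_eq_sum_range_manh hax, Finset.range_eq_Ico] at hlen
  have hbefore := manh_le_sum_Ico π.vertex (Nat.zero_le j.val)
  have hafter := manh_le_sum_Ico π.vertex hj
  rw [GPath.vertex_zero, hs, GPath.vertex_val] at hbefore
  rw [GPath.vertex_last, ht, GPath.vertex_val] at hafter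
  exact inBox_of_manh_add_manh_eq
    (le_antisymm (by linarith) (manh_triangle_s7 s (π.pts j) t))

lemma InPi.exists_hananEdge_of_mem_edges {P : Inst} {u : Point × Point} {π : GPath}
    (h : InPi P u π) {e : Sym2 Point} (he : e ∈ π.edges) :
    ∃ p q : Point, e = s(p, q) ∧ IsHananEdge P p q ∧ inBox u.1 u.2 p ∧ inBox u.1 u.2 q := by
  obtain ⟨i, -, rfl⟩ := Finset.mem_image.mp he
  exact ⟨_, _, rfl, h.2 i, h.1.inBox_pts i.castSucc, h.1.inBox_pts i.succ⟩

lemma IGAdj_of_mem_edges {P : Inst} {u v : Point × Point} {πu πv : GPath}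
    (hu : InPi P u πu) (hv : InPi P v πv) (hne : u ≠ v) {e : Sym2 Point}
    (heu : e ∈ πu.edges) (hev : e ∈ πv.edges) : IGAdj P u v := by
  obtain ⟨p, q, rfl, hpq, hup, huq⟩ := hu.exists_hananEdge_of_mem_edges heu
  obtain ⟨p', q', he, -, hvp, hvq⟩ := hv.exists_hananEdge_of_mem_edges hev
  rcases Sym2.eq_iff.mp he with ⟨rfl, rfl⟩ | ⟨rfl, rfl⟩
  · exact ⟨hne, p, q, hpq, hup, huq, hvp, hvq⟩
  · exact ⟨hne, p, q, hpq, hup, huq, hvq, hvp⟩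

lemma sym2Len_nonneg (e : Sym2 Point) : 0 ≤ sym2Len e := by
  induction e using Sym2.ind with
  | _ a b => exact Real.sqrt_nonneg _

lemma netLength_union (A C : Finset (Sym2 Point)) :
    netLength (A ∪ C) = netLength A + netLength (C \ A) := by
  rw [netLength, ← Finset.union_sdiff_self_eq_union, Finset.sum_union Finset.disjoint_sdiff]
  rfl

lemma netLength_union_lt_union {A B C : Finset (Sym2 Point)} (hAB : netLength A < netLength B)
    (hC : C ∩ B ⊆ A) : netLength (A ∪ C) < netLength (B ∪ C) := by
  have hsub : C \ A ⊆ C \ B := fun e he => by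
    rw [Finset.mem_sdiff] at he ⊢
    exact ⟨he.1, fun heB => he.2 (hC (Finset.mem_inter.mpr ⟨he.1, heB⟩))⟩
  have hle : netLength (C \ A) ≤ netLength (C \ B) :=
    Finset.sum_le_sum_of_subset_of_nonneg hsub fun e _ _ => sym2Len_nonneg e
  rw [netLength_union, netLength_union]
  linarith

lemma IsFeasChoice.piecewise {P : Inst} {f g : Point × Point → GPath} (hf : IsFeasChoice P f)
    (hg : IsFeasChoice P g) (Q : Finset (Point × Point)) : IsFeasChoice P (Q.piecewise f g) := by
  intro v hv
  by_cases hvQ : v ∈ Q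
  · rw [Finset.piecewise_eq_of_mem _ _ _ hvQ]; exact hf v hv
  · rw [Finset.piecewise_eq_of_notMem _ _ _ hvQ]; exact hg v hv

lemma netOf_eq_union {P Q : Inst} (hQ : Q ⊆ P) (h : Point × Point → GPath) :
    netOf P h = Q.biUnion (fun w => (h w).edges) ∪ (P \ Q).biUnion (fun w => (h w).edges) := by
  conv_lhs => rw [netOf, ← Finset.union_sdiff_of_subset hQ]
  exact Finset.union_biUnion

lemma netOf_piecewise {P Q : Inst} (hQ : Q ⊆ P) (f g : Point × Point → GPath) :
    netOf P (Q.piecewise f g) =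
      Q.biUnion (fun w => (f w).edges) ∪ (P \ Q).biUnion (fun w => (g w).edges) := by
  rw [netOf_eq_union hQ]
  congr 1 <;> refine Finset.biUnion_congr rfl fun w hw => ?_
  · rw [Finset.piecewise_eq_of_mem _ _ _ hw]
  · rw [Finset.piecewise_eq_of_notMem _ _ _ (Finset.mem_sdiff.mp hw).2]

theorem separation_suboptimal_general (P : Inst) (Q X : Finset (Point × Point))
    (hQ : Q ⊆ P)
    (hsep : ∀ w ∈ Q, w ∉ X → ∀ u ∈ P, u ∉ Q → ¬ IGAdj P w u)
    (f g : Point × Point → GPath)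
    (hf : IsFeasChoice P f) (hg : IsFeasChoice P g)
    (hagree : ∀ v ∈ X, f v = g v)
    (hlt : netLength (Q.biUnion fun w => (f w).edges) <
           netLength (Q.biUnion fun w => (g w).edges)) :
    ¬ IsOptChoice P g := by
  intro hopt
  have hboundary : ((P \ Q).biUnion fun u => (g u).edges) ∩ (Q.biUnion fun w => (g w).edges) ⊆
      Q.biUnion fun w => (f w).edges := by
    intro e he
    simp only [Finset.mem_inter, Finset.mem_biUnion, Finset.mem_sdiff] at he
    obtain ⟨⟨u, ⟨huP, huQ⟩, heu⟩, w, hwQ, hew⟩ := he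
    have hwX : w ∈ X := by
      by_contra hwX
      exact hsep w hwQ hwX u huP huQ (IGAdj_of_mem_edges (hg w (hQ hwQ)) (hg u huP)
        (by rintro rfl; exact huQ hwQ) hew heu)
    exact Finset.mem_biUnion.mpr ⟨w, hwQ, by rw [hagree w hwX]; exact hew⟩
  have hshorter : netLength (netOf P (Q.piecewise f g)) < netLength (netOf P g) := by
    rw [netOf_piecewise hQ, netOf_eq_union hQ]
    exact netLength_union_lt_union hlt hboundary
  exact (hopt.2 _ (hf.piecewise hg Q)).not_gt hshorter

/-- The separation lemma of Appendix A: if no pair of `Q \ X` is adjacent in `IG[P]` to a pair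
outside `Q`, and two feasible solutions agree on `X` but the first is strictly shorter on `Q`,
then the second is not optimal. -/
theorem separation_suboptimal (P : Inst) (Q X : Finset (Point × Point))
    (hQ : Q ⊆ P) (hX : X ⊆ Q)
    (hsep : ∀ w ∈ Q, w ∉ X → ∀ u ∈ P, u ∉ Q → ¬ IGAdj P w u)
    (f g : Point × Point → GPath)
    (hf : IsFeasChoice P f) (hg : IsFeasChoice P g)
    (hagree : ∀ v ∈ X, f v = g v)
    (hlt : netLength (Q.biUnion fun w => (f w).edges) <
           netLength (Q.biUnion fun w => (g w).edges)) :
    ¬ IsOptChoice P g :=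
  separation_suboptimal_general P Q X hQ hsep f g hf hg hagree hlt
end
end
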